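/- arXiv:math/0607003 — 6 statements merged into one kernel-verified Lean document; each statement's English description precedes it below -/
import Mathlib

section
/- Let M be the rank 6 lattice with basis l', e_1,...,e_5 and bilinear form given by l'·l' = e_i·e_i = -2, l'·e_i = 1, and e_i·e_j = 0 for i ≠ j. Then M is isometric to the lattice D_4 ⊕ U(2), where U(2) is the hyperbolic plane with form scaled by 2. -/
open Matrix

/-- Gram matrix of the rank 6 lattice `M` with basis `l', e₁, …, e₅`:
`l'² = eᵢ² = -2`, `l'·eᵢ = 1`, `eᵢ·eⱼ = 0` for `i ≠ j`. -/
def Mgram : Matrix (Fin 6) (Fin 6) ℤ :=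
  fun i j => if i = j then -2 else if i = 0 ∨ j = 0 then 1 else 0

/-- The bilinear form of the lattice `M`. -/
def bM (x y : Fin 6 → ℤ) : ℤ := x ⬝ᵥ (Mgram.mulVec y)

/-- Gram matrix of `D₄ ⊕ U(2)`: the (negative definite) `D₄` root lattice
(nodes `0,2,3` attached to the central node `1`) orthogonally summed with the
hyperbolic plane scaled by `2` (Gram matrix `[[0,2],[2,0]]`). -/
def D4U2gram : Matrix (Fin 6) (Fin 6) ℤ :=
  !![-2,  1,  0,  0,  0,  0;
      1, -2,  1,  1,  0,  0;
      0,  1, -2,  0,  0,  0;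
      0,  1,  0, -2,  0,  0;
      0,  0,  0,  0,  0,  2;
      0,  0,  0,  0,  2,  0]

/-- The change-of-basis matrix: column `k` gives the coordinates of the `k`-th
basis vector of `M` in the standard basis of `D₄ ⊕ U(2)`. -/
def Amat : Matrix (Fin 6) (Fin 6) ℤ :=
  !![ 0, 1, 0, 0, -1, -1;
      1, 0, 0, 0, -2, -2;
      0, 0, 1, 0, -1, -1;
      0, 0, 0, 1, -1, -1;
      0, 0, 0, 0,  0,  1;
      0, 0, 0, 0,  1,  0]

/-- Inverse of `Amat`. -/
def Bmat : Matrix (Fin 6) (Fin 6) ℤ :=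
  !![ 0, 1, 0, 0, 2, 2;
      1, 0, 0, 0, 1, 1;
      0, 0, 1, 0, 1, 1;
      0, 0, 0, 1, 1, 1;
      0, 0, 0, 0, 0, 1;
      0, 0, 0, 0, 1, 0]

lemma AB : Amat * Bmat = 1 := by decide
lemma BA : Bmat * Amat = 1 := by decide
lemma gram_eq : Amatᵀ * D4U2gram * Amat = Mgram := by decide

/-- The lattice `M` is isometric to `D₄ ⊕ U(2)`. -/
theorem M_isometric_D4_U2 :
    ∃ f : (Fin 6 → ℤ) ≃ₗ[ℤ] (Fin 6 → ℤ),
      ∀ v w : Fin 6 → ℤ, (f v) ⬝ᵥ (D4U2gram.mulVec (f w)) = bM v w := by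
  refine ⟨LinearEquiv.ofLinear (Matrix.toLin' Amat) (Matrix.toLin' Bmat) ?_ ?_, ?_⟩
  · rw [← Matrix.toLin'_mul, AB, Matrix.toLin'_one]
  · rw [← Matrix.toLin'_mul, BA, Matrix.toLin'_one]
  · intro v w
    show (Amat.mulVec v) ⬝ᵥ (D4U2gram.mulVec (Amat.mulVec w)) = bM v w
    rw [Matrix.mulVec_mulVec, Matrix.dotProduct_mulVec, ← Matrix.vecMul_transpose,
      Matrix.vecMul_vecMul, ← Matrix.dotProduct_mulVec, ← Matrix.mul_assoc, gram_eq]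
    rfl
end

section
/- The discriminant group A_M = M*/M of the lattice M (with basis l', e_1,...,e_5, form l'² = e_i² = -2, l'·e_i = 1, e_i·e_j = 0 for i≠j) is isomorphic to (Z/2Z)^4. -/
open Matrix BigOperators

/-- The basis vector `l'`. -/
def lvec : Fin 6 → ℤ := fun j => if j = 0 then 1 else 0

/-- The basis vector `eᵢ`. -/
def ev (i : Fin 5) : Fin 6 → ℤ := fun j => if j = i.succ then 1 else 0

/-- The element `h = 2l' + e₁ + ⋯ + e₅`. -/
def hv : Fin 6 → ℤ := fun j => if j = 0 then 2 else 1

/-- The ℚ-valued bilinear form attached to an integral Gram matrix `A`. -/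
def gq {n : ℕ} (A : Matrix (Fin n) (Fin n) ℤ) (y z : Fin n → ℚ) : ℚ :=
  y ⬝ᵥ ((A.map (Int.cast : ℤ → ℚ)).mulVec z)

lemma gq_add_left {n : ℕ} (A : Matrix (Fin n) (Fin n) ℤ) (y y' z : Fin n → ℚ) :
    gq A (y + y') z = gq A y z + gq A y' z := by
  simp [gq, add_dotProduct]

lemma gq_zsmul_left {n : ℕ} (A : Matrix (Fin n) (Fin n) ℤ) (c : ℤ) (y z : Fin n → ℚ) :
    gq A (c • y) z = (c : ℚ) * gq A y z := by
  rw [gq, smul_dotProduct, zsmul_eq_mul]; rfl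

/-- The dual lattice `L* = {y ∈ L ⊗ ℚ : y·x ∈ ℤ for all x ∈ L}` of the lattice
with Gram matrix `A`, as a ℤ-submodule of `ℚⁿ`. -/
def dualL {n : ℕ} (A : Matrix (Fin n) (Fin n) ℤ) : Submodule ℤ (Fin n → ℚ) where
  carrier := {y | ∀ x : Fin n → ℤ, ∃ m : ℤ, gq A y (fun i => (x i : ℚ)) = (m : ℚ)}
  add_mem' := by
    intro a b ha hb x
    obtain ⟨m1, h1⟩ := ha x
    obtain ⟨m2, h2⟩ := hb x
    exact ⟨m1 + m2, by rw [gq_add_left, h1, h2]; push_cast; ring⟩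
  zero_mem' := by
    intro x
    exact ⟨0, by simp [gq]⟩
  smul_mem' := by
    intro c a ha x
    obtain ⟨m, h⟩ := ha x
    exact ⟨c * m, by rw [gq_zsmul_left, h]; push_cast; ring⟩

/-- The lattice `L = ℤⁿ` sitting inside `ℚⁿ` (spanned by the standard basis). -/
def stdL (n : ℕ) : Submodule ℤ (Fin n → ℚ) :=
  Submodule.span ℤ (Set.range fun i : Fin n => fun j => if j = i then (1 : ℚ) else 0)

/-- The discriminant group `A_L = L*/L` of the lattice with Gram matrix `A`. -/
abbrev discG {n : ℕ} (A : Matrix (Fin n) (Fin n) ℤ) :=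
  (dualL A) ⧸ (Submodule.comap (dualL A).subtype (stdL n))

/-!
In the coordinates of the basis `l', e₁, …, e₅`, a vector `y ∈ ℚ⁶` lies in `M*` iff `y₀ ∈ ℤ`,
`2yₖ ∈ ℤ` for `k = 1, …, 5` and `y₁ + ⋯ + y₅ ∈ ℤ`. So `y ↦ (2y₁, …, 2y₄) mod 2` is a
homomorphism `M* → (ℤ/2)⁴`; it is onto, and its kernel is `M` because once `y₁, …, y₄` are
integers the sum condition forces `y₅ ∈ ℤ` as well.
-/

section General

variable {n : ℕ}

lemma gq_eq_vecMul_dotProduct (A : Matrix (Fin n) (Fin n) ℤ) (y z : Fin n → ℚ) :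
    gq A y z = (y ᵥ* A.map (↑)) ⬝ᵥ z :=
  dotProduct_mulVec y _ z

lemma mem_dualL_iff (A : Matrix (Fin n) (Fin n) ℤ) (y : Fin n → ℚ) :
    y ∈ dualL A ↔ ∀ j, ∃ m : ℤ, (y ᵥ* A.map (↑)) j = m := by
  refine ⟨fun hy j => ?_, fun h x => ?_⟩
  · obtain ⟨m, hm⟩ := hy (Pi.single j 1)
    refine ⟨m, ?_⟩
    have hx : (fun i => ((Pi.single j 1 : Fin n → ℤ) i : ℚ)) = Pi.single j 1 := by
      ext i
      by_cases hij : i = j <;> simp [hij]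
    rwa [gq_eq_vecMul_dotProduct, hx, dotProduct_single, mul_one] at hm
  · choose m hm using h
    exact ⟨m ⬝ᵥ x, by simp [gq_eq_vecMul_dotProduct, dotProduct, hm, mul_comm]⟩

lemma mem_stdL_iff (y : Fin n → ℚ) : y ∈ stdL n ↔ ∀ i, ∃ m : ℤ, y i = m := by
  refine ⟨fun hy => ?_, fun h => ?_⟩
  · induction hy using Submodule.span_induction with
    | mem _ hx =>
      obtain ⟨j, rfl⟩ := hx
      exact fun i => ⟨if i = j then 1 else 0, by split_ifs <;> simp_all⟩
    | zero => exact fun _ => ⟨0, by simp⟩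
    | add _ _ _ _ hx hy =>
      intro i
      obtain ⟨a, ha⟩ := hx i
      obtain ⟨b, hb⟩ := hy i
      exact ⟨a + b, by simp [ha, hb]⟩
    | smul c _ _ hx =>
      intro i
      obtain ⟨a, ha⟩ := hx i
      exact ⟨c * a, by simp [ha]⟩
  · choose m hm using h
    have hy : y = ∑ i, m i • fun j => if j = i then (1 : ℚ) else 0 := by
      ext j
      simp [hm j]
    rw [hy]
    exact Submodule.sum_mem _ fun i _ => Submodule.smul_mem _ _ (Submodule.subset_span ⟨i, rfl⟩)

end General

-- Only ever applied to integers, where it is reduction mod 2.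
def ratParity (q : ℚ) : ZMod 2 := q.num

lemma ratParity_intCast (m : ℤ) : ratParity m = m := by
  simp [ratParity]

lemma ratParity_eq_zero_iff {q : ℚ} {m : ℤ} (h : 2 * q = m) :
    ratParity (2 * q) = 0 ↔ ∃ k : ℤ, q = k := by
  rw [h, ratParity_intCast, ZMod.intCast_zmod_eq_zero_iff_dvd]
  constructor
  · rintro ⟨k, rfl⟩
    exact ⟨k, by push_cast at h; linarith⟩
  · rintro ⟨k, rfl⟩
    exact ⟨k, by exact_mod_cast h.symm⟩

lemma vecMul_Mgram_zero (y : Fin 6 → ℚ) :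
    (y ᵥ* Mgram.map (↑)) 0 = -2 * y 0 + ∑ k : Fin 5, y k.succ := by
  simp [vecMul, dotProduct, Fin.sum_univ_succ _ (n := 5), Mgram, Fin.succ_ne_zero, mul_comm]

lemma vecMul_Mgram_succ (y : Fin 6 → ℚ) (j : Fin 5) :
    (y ᵥ* Mgram.map (↑)) j.succ = y 0 - 2 * y j.succ := by
  simp [vecMul, dotProduct, Fin.sum_univ_succ _ (n := 5), Mgram, (Fin.succ_ne_zero j).symm, sub_eq_add_neg, mul_comm]

lemma mem_dualL_Mgram_iff (y : Fin 6 → ℚ) :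
    y ∈ dualL Mgram ↔ (∃ m : ℤ, y 0 = m) ∧ (∀ k : Fin 5, ∃ m : ℤ, 2 * y k.succ = m) ∧
      ∃ m : ℤ, ∑ k : Fin 5, y k.succ = m := by
  simp only [mem_dualL_iff, Fin.forall_fin_succ (n := 5), vecMul_Mgram_zero, vecMul_Mgram_succ]
  have hsum : ∑ k : Fin 5, (y 0 - 2 * y k.succ) = 5 * y 0 - 2 * ∑ k : Fin 5, y k.succ := by
    simp [Finset.sum_sub_distrib, Finset.mul_sum]
  constructor
  · rintro ⟨⟨a, ha⟩, h⟩
    choose b hb using h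
    have h0 : y 0 = (2 * a + ∑ k, b k : ℤ) := by
      push_cast
      rw [← Finset.sum_congr rfl fun k _ => hb k, hsum]
      linarith
    refine ⟨⟨_, h0⟩, fun k => ⟨2 * a + ∑ k, b k - b k, ?_⟩, ⟨a + 2 * (2 * a + ∑ k, b k), ?_⟩⟩
    · rw [Int.cast_sub, ← h0, ← hb k]
      ring
    · rw [Int.cast_add, Int.cast_mul, ← h0]
      push_cast
      linarith
  · rintro ⟨⟨c, hc⟩, hd, ⟨s, hs⟩⟩
    choose d hd using hd
    refine ⟨⟨-2 * c + s, by rw [hc, hs]; push_cast; ring⟩, fun k => ⟨c - d k, ?_⟩⟩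
    rw [hc, hd k]
    push_cast
    ring

def dualParity : dualL Mgram →ₗ[ℤ] (Fin 4 → ZMod 2) :=
  AddMonoidHom.toIntLinearMap
    { toFun := fun y j => ratParity (2 * y.1 j.castSucc.succ)
      map_zero' := by
        ext j
        simpa using ratParity_intCast 0
      map_add' := fun y z => by
        ext j
        obtain ⟨a, ha⟩ := ((mem_dualL_Mgram_iff y.1).1 y.2).2.1 j.castSucc
        obtain ⟨b, hb⟩ := ((mem_dualL_Mgram_iff z.1).1 z.2).2.1 j.castSucc
        have hab : 2 * (y + z).1 j.castSucc.succ = (a + b : ℤ) := by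
          rw [Submodule.coe_add, Pi.add_apply, mul_add, ha, hb, Int.cast_add]
        simp only [Pi.add_apply]
        rw [hab, ha, hb, ratParity_intCast, ratParity_intCast, ratParity_intCast, Int.cast_add] }

lemma ker_dualParity : LinearMap.ker dualParity = (stdL 6).comap (dualL Mgram).subtype := by
  ext ⟨y, hy⟩
  obtain ⟨⟨c, hc⟩, hd, ⟨s, hs⟩⟩ := (mem_dualL_Mgram_iff y).1 hy
  have hlast : (∀ j : Fin 4, ∃ m : ℤ, y j.castSucc.succ = m) →
      ∃ m : ℤ, y (Fin.last 4).succ = m := by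
    intro h
    choose m hm using h
    refine ⟨s - ∑ j, m j, ?_⟩
    rw [Fin.sum_univ_castSucc] at hs
    rw [Int.cast_sub, Int.cast_sum, ← Finset.sum_congr rfl fun j _ => hm j, ← hs]
    ring
  have hker : dualParity ⟨y, hy⟩ = 0 ↔ ∀ j : Fin 4, ∃ m : ℤ, y j.castSucc.succ = m :=
    funext_iff.trans (forall_congr' fun j => ratParity_eq_zero_iff (hd j.castSucc).choose_spec)
  rw [LinearMap.mem_ker, hker, Submodule.mem_comap, Submodule.coe_subtype, mem_stdL_iff]
  change _ ↔ ∀ i : Fin 6, ∃ m : ℤ, y i = m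
  rw [Fin.forall_fin_succ (n := 5), Fin.forall_fin_succ' (n := 4)]
  exact ⟨fun h => ⟨⟨c, hc⟩, h, hlast h⟩, fun h => h.2.1⟩

lemma dualParity_surjective : Function.Surjective dualParity := by
  intro b
  let c : Fin 4 → ℤ := fun j => (b j).val
  let w : Fin 5 → ℤ := Fin.snoc c (∑ j, c j)
  let y : Fin 6 → ℚ := Fin.cons 0 fun k => (w k : ℚ) / 2
  have hy : y ∈ dualL Mgram := by
    refine (mem_dualL_Mgram_iff y).2 ⟨⟨0, by simp [y]⟩, fun k => ⟨w k, by simp only [y, Fin.cons_succ]; ring⟩,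
      ⟨∑ j, c j, ?_⟩⟩
    simp only [y, w, Fin.cons_succ, Fin.sum_univ_castSucc, Fin.snoc_castSucc, Fin.snoc_last]
    push_cast
    rw [← Finset.sum_div]
    ring
  refine ⟨⟨y, hy⟩, funext fun j => ?_⟩
  change ratParity (2 * ((w j.castSucc : ℚ) / 2)) = b j
  rw [mul_div_cancel₀ _ two_ne_zero, ratParity_intCast]
  simp [w, c]

/-- The discriminant group `A_M = M*/M` of the lattice `M` is isomorphic
to `(ℤ/2ℤ)⁴`. -/
theorem discriminant_group_M :
    Nonempty (discG Mgram ≃+ (Fin 4 → ZMod 2)) :=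
  ⟨((Submodule.quotEquivOfEq _ _ ker_dualParity.symm).trans
    (dualParity.quotKerEquivOfSurjective dualParity_surjective)).toAddEquiv⟩
end

section
/- There is no element d in the lattice M with d·d = 0 and d·h = 1, where h = 2l' + e_1 + ... + e_5. More precisely, if d = a l' + Σ b_i e_i ∈ M satisfies d·h = 1 then a = 1 and d·d ≡ 2 mod 4, so d·d ≠ 0. -/
open Matrix BigOperators

lemma even_sq_sub (n : ℤ) : ∃ k : ℤ, n ^ 2 - n = 2 * k := by
  rcases Int.even_or_odd n with ⟨k, hk⟩ | ⟨k, hk⟩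
  · exact ⟨2 * k ^ 2 - k, by subst hk; ring⟩
  · exact ⟨2 * k ^ 2 + k, by subst hk; ring⟩

/-- There is no `d ∈ M` with `d·d = 0` and `d·h = 1`: indeed, writing
`d = a·l' + Σ bᵢ eᵢ`, the condition `d·h = 1` forces `a = 1` (the coefficient
of `l'`), and then `d·d ≡ 2 (mod 4)`, so `d·d ≠ 0`. -/
theorem no_isotropic_meeting_h_once :
    ∀ d : Fin 6 → ℤ, bM d hv = 1 →
      d 0 = 1 ∧ (∃ m : ℤ, bM d d = 4 * m + 2) ∧ bM d d ≠ 0 := by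
  intro d hd
  simp only [bM, hv, Mgram, dotProduct, mulVec, Fin.sum_univ_six] at hd ⊢
  simp (config := { decide := true }) only [bM, hv, Mgram, dotProduct, mulVec, Fin.sum_univ_six, ite_true, ite_false] at hd ⊢
  norm_num at hd ⊢
  have h0 : d 0 = 1 := by linarith
  obtain ⟨k1, hk1⟩ := even_sq_sub (d 1)
  obtain ⟨k2, hk2⟩ := even_sq_sub (d 2)
  obtain ⟨k3, hk3⟩ := even_sq_sub (d 3)
  obtain ⟨k4, hk4⟩ := even_sq_sub (d 4)
  obtain ⟨k5, hk5⟩ := even_sq_sub (d 5)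
  refine ⟨h0, ⟨-(k1 + k2 + k3 + k4 + k5) - 1, ?_⟩, ?_⟩
  · rw [h0]; linear_combination -2 * (hk1 + hk2 + hk3 + hk4 + hk5)
  · intro hc
    rw [h0] at hc
    have : (0 : ℤ) = 4 * (-(k1 + k2 + k3 + k4 + k5) - 1) + 2 := by
      rw [← hc]; linear_combination -2 * (hk1 + hk2 + hk3 + hk4 + hk5)
    omega
end

section
/- The set of roots of M orthogonal to h is exactly {±e_1, ±e_2, ±e_3, ±e_4, ±e_5}; that is, if δ ∈ M satisfies δ·δ = -2 and δ·h = 0 then δ = ±e_i for some i. -/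
open Matrix BigOperators

/-- If a sum of five integer squares is `1` and the first variable is nonzero, then the
first variable is `±1` and the others vanish. -/
lemma pick (x1 x2 x3 x4 x5 : ℤ) (h : x1^2+x2^2+x3^2+x4^2+x5^2 = 1) (hx : x1 ≠ 0) :
    (x1 = 1 ∨ x1 = -1) ∧ x2 = 0 ∧ x3 = 0 ∧ x4 = 0 ∧ x5 = 0 := by
  have h1 : 1 ≤ |x1| := Int.one_le_abs hx
  have h1' : 1 ≤ x1 ^ 2 := by nlinarith [sq_abs x1]
  have hsq : x1 ^ 2 = 1 := by nlinarith [sq_nonneg x2, sq_nonneg x3, sq_nonneg x4, sq_nonneg x5]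
  have hz : x2 = 0 ∧ x3 = 0 ∧ x4 = 0 ∧ x5 = 0 := by
    refine ⟨?_, ?_, ?_, ?_⟩ <;>
      nlinarith [sq_nonneg x2, sq_nonneg x3, sq_nonneg x4, sq_nonneg x5]
  have : (x1 - 1) * (x1 + 1) = 0 := by linear_combination hsq
  rcases mul_eq_zero.mp this with h | h
  · exact ⟨Or.inl (by linarith), hz⟩
  · exact ⟨Or.inr (by linarith), hz⟩

/-- The roots of `M` orthogonal to `h` are exactly `±e₁, …, ±e₅`. -/
theorem roots_orthogonal_to_h :
    ∀ δ : Fin 6 → ℤ, bM δ δ = -2 → bM δ hv = 0 →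
      ∃ i : Fin 5, δ = ev i ∨ δ = -ev i := by
  intro δ h2 h0
  simp (config := { decide := true }) [bM, Mgram, hv, Matrix.mulVec, dotProduct,
    Fin.sum_univ_six] at h2 h0
  rw [h0] at h2
  have hs : δ 1 ^ 2 + δ 2 ^ 2 + δ 3 ^ 2 + δ 4 ^ 2 + δ 5 ^ 2 = 1 := by nlinarith [h2]
  by_cases c1 : δ 1 = 0
  · by_cases c2 : δ 2 = 0
    · by_cases c3 : δ 3 = 0
      · by_cases c4 : δ 4 = 0
        · obtain ⟨hpm, z1, z2, z3, z4⟩ :=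
            pick (δ 5) (δ 1) (δ 2) (δ 3) (δ 4) (by linarith [hs]) (by
              intro c5; rw [c1, c2, c3, c4, c5] at hs; norm_num at hs)
          rcases hpm with hp | hp
          · exact ⟨4, Or.inl (by
              funext j
              fin_cases j <;> simp (config := { decide := true }) [ev] <;> omega)⟩
          · exact ⟨4, Or.inr (by
              funext j
              fin_cases j <;> simp (config := { decide := true }) [ev] <;> omega)⟩
        · obtain ⟨hpm, z1, z2, z3, z4⟩ :=
            pick (δ 4) (δ 1) (δ 2) (δ 3) (δ 5) (by linarith [hs]) c4
          rcases hpm with hp | hp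
          · exact ⟨3, Or.inl (by
              funext j
              fin_cases j <;> simp (config := { decide := true }) [ev] <;> omega)⟩
          · exact ⟨3, Or.inr (by
              funext j
              fin_cases j <;> simp (config := { decide := true }) [ev] <;> omega)⟩
      · obtain ⟨hpm, z1, z2, z3, z4⟩ :=
          pick (δ 3) (δ 1) (δ 2) (δ 4) (δ 5) (by linarith [hs]) c3
        rcases hpm with hp | hp
        · exact ⟨2, Or.inl (by
            funext j
            fin_cases j <;> simp (config := { decide := true }) [ev] <;> omega)⟩
        · exact ⟨2, Or.inr (by
            funext j
            fin_cases j <;> simp (config := { decide := true }) [ev] <;> omega)⟩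
    · obtain ⟨hpm, z1, z2, z3, z4⟩ :=
        pick (δ 2) (δ 1) (δ 3) (δ 4) (δ 5) (by linarith [hs]) c2
      rcases hpm with hp | hp
      · exact ⟨1, Or.inl (by
          funext j
          fin_cases j <;> simp (config := { decide := true }) [ev] <;> omega)⟩
      · exact ⟨1, Or.inr (by
          funext j
          fin_cases j <;> simp (config := { decide := true }) [ev] <;> omega)⟩
  · obtain ⟨hpm, z1, z2, z3, z4⟩ :=
      pick (δ 1) (δ 2) (δ 3) (δ 4) (δ 5) (by linarith [hs]) c1
    rcases hpm with hp | hp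
    · exact ⟨0, Or.inl (by
        funext j
        fin_cases j <;> simp (config := { decide := true }) [ev] <;> omega)⟩
    · exact ⟨0, Or.inr (by
        funext j
        fin_cases j <;> simp (config := { decide := true }) [ev] <;> omega)⟩
end

section
/- Let p be a point of multiplicity k on a plane curve C of degree d, and define the stability threshold t_p(C) as -inf over adapted 1-PS λ of μ(c,λ)/||λ||. Then 3k/2 - d ≤ t_p(C) ≤ 3k - d. (Combinatorial version: if every monomial x_0^a x_1^b x_2^c appearing in c with p = (1:0:0) has b + c ≥ k, then min over r ∈ [-1/2,1] of μ(Ξ_d, r) satisfies d - 3k ≤ min_r μ(Ξ_d, r) ≤ d - 3k/2.) -/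
/-- The pairing `⟨x₀^a x₁^b x₂^c, r⟩ = a + b·r - c·(1+r)` of a monomial
against the normalized weight `r` of a 1-PS adapted to `p = (1:0:0)`. -/
def pairing (m : ℕ × ℕ × ℕ) (r : ℚ) : ℚ :=
  (m.1 : ℚ) + (m.2.1 : ℚ) * r - (m.2.2 : ℚ) * (1 + r)

/-- Bounds for the stability threshold in terms of the multiplicity
(combinatorial version).  Let `Ξ_d` be the set of monomials of a degree `d`
curve with a point of multiplicity exactly `k` at `(1:0:0)` (so every monomial
`x₀^a x₁^b x₂^c` has `b + c ≥ k` and some monomial has `b + c = k`).  Then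
`d - 3k ≤ min_{r ∈ [-1/2,1]} μ(Ξ_d, r) ≤ d - 3k/2`, i.e. the stability
threshold `t_p(C) = -min_r μ(Ξ_d, r)` satisfies `3k/2 - d ≤ t_p(C) ≤ 3k - d`. -/
theorem stability_threshold_multiplicity_bounds
    (d k : ℕ) (Ξd : Finset (ℕ × ℕ × ℕ)) (hne : Ξd.Nonempty)
    (hdeg : ∀ m ∈ Ξd, m.1 + m.2.1 + m.2.2 = d)
    (hmult : ∀ m ∈ Ξd, k ≤ m.2.1 + m.2.2)
    (hex : ∃ m ∈ Ξd, m.2.1 + m.2.2 = k) :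
    (∀ r ∈ Set.Icc (-(1 : ℚ)/2) 1,
        (d : ℚ) - 3 * (k : ℚ) ≤ Ξd.sup' hne (fun m => pairing m r)) ∧
    (∃ r ∈ Set.Icc (-(1 : ℚ)/2) 1,
        Ξd.sup' hne (fun m => pairing m r) ≤ (d : ℚ) - 3 * (k : ℚ) / 2) := by
  constructor
  · rintro r ⟨hr1, hr2⟩
    obtain ⟨m, hm, hmk⟩ := hex
    refine le_trans ?_ (Finset.le_sup' (fun m => pairing m r) hm)
    have hd := hdeg m hm
    obtain ⟨a, b, c⟩ := m
    simp only at hd hmk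
    have hdq : (a : ℚ) + b + c = d := by push_cast [← hd]; ring
    have hkq : (b : ℚ) + c = k := by push_cast [← hmk]; ring
    have hb : (0:ℚ) ≤ b := Nat.cast_nonneg b
    have hc : (0:ℚ) ≤ c := Nat.cast_nonneg c
    have h1 : -(b : ℚ)/2 ≤ b * r := by nlinarith
    have h2 : -(c : ℚ) * (1 + r) ≥ -2 * c := by nlinarith
    simp only [pairing]
    nlinarith
  · refine ⟨-(1:ℚ)/2, ⟨le_refl _, by norm_num⟩, ?_⟩
    apply Finset.sup'_le
    intro m hm
    have hd := hdeg m hm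
    have hk := hmult m hm
    obtain ⟨a, b, c⟩ := m
    simp only at hd hk
    have hdq : (a : ℚ) + b + c = d := by push_cast [← hd]; ring
    have hkq : (k : ℚ) ≤ b + c := by exact_mod_cast hk
    simp only [pairing]
    nlinarith
end

section
/- Let μ^t(Ξ,r) be as before for a degree 5 configuration. For the pair with C: x_0 x_1 x_2³ + x_1⁵ = 0 and L: x_0 = 0 (configuration Ξ_5 = {x_0 x_1 x_2³, x_1⁵}, Ξ_1 = {x_0}), one has min_{r ∈ [-1/2,1]} μ^t(Ξ, r) ≥ 0 if and only if t = 10/7; i.e., this pair is semistable exactly at slope t = 10/7. -/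
/-- Semistability of the pair `C : x₀x₁x₂³ + x₁⁵ = 0`, `L : x₀ = 0` happens
exactly at slope `t = 10/7`.  For the monomial configuration
`Ξ₅ = {x₀x₁x₂³, x₁⁵}`, `Ξ₁ = {x₀}` (weights `(1, r, -1-r)`) the numerical
function is `max(-2-2r, 5r) + t·1`, and for the symmetric configuration with
`L ≡ (x₂ = 0)` (monomials `{x₀³x₁x₂, x₁⁵}`, `Ξ₁ = {x₂}`) it is
`max(2, 5r) + t·(-1-r)`.  Both are nonnegative on `r ∈ [-1/2, 1]` if and only
if `t = 10/7`. -/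
theorem semistable_iff_ten_sevenths (t : ℚ) :
    ((∀ r ∈ Set.Icc (-(1 : ℚ)/2) 1, 0 ≤ max (-2 - 2*r) (5*r) + t * 1) ∧
     (∀ r ∈ Set.Icc (-(1 : ℚ)/2) 1, 0 ≤ max 2 (5*r) + t * (-1 - r))) ↔
    t = 10/7 := by
  constructor
  · rintro ⟨h1, h2⟩
    have a := h1 (-2/7) (by constructor <;> norm_num)
    have b := h2 (2/5) (by constructor <;> norm_num)
    norm_num at a b
    linarith
  · rintro rfl
    constructor
    · rintro r ⟨hr1, hr2⟩
      rcases le_total r (-2/7) with h | h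
      · have : (-2 - 2*r : ℚ) ≤ max (-2 - 2*r) (5*r) := le_max_left _ _
        linarith
      · have : (5*r : ℚ) ≤ max (-2 - 2*r) (5*r) := le_max_right _ _
        linarith
    · rintro r ⟨hr1, hr2⟩
      rcases le_total r (2/5) with h | h
      · have : (2 : ℚ) ≤ max 2 (5*r) := le_max_left _ _
        linarith
      · have : (5*r : ℚ) ≤ max 2 (5*r) := le_max_right _ _
        linarith
end
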